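/- Let N ≥ 2 and α ∈ (-1, 0), and consider the weighted isoperimetric ratio R(M) = (∫_{∂M ∩ ℝ^N_+} |x|^k x_N^α dH^{N-1}) / (∫_M |x|^ℓ x_N^α dx)^{(k+N+α-1)/(ℓ+N+α)} for measurable M ⊂ ℝ^N_+. If the translated balls Ω(t) = B₁(t, 0, …, 0) (centered on the x₁-axis) satisfy R(Ω(t)) → 0 as t → +∞ whenever k(N+α) < ℓ(N+α-1), then k(N+α) ≥ ℓ(N+α-1) is a necessary condition for existence of a minimizer of R among measurable subsets of ℝ^N_+ with positive finite weighted measure. Prove: if k(N+α) < ℓ(N+α-1), ℓ+N+α > 0, k+N+α > 0, then lim_{t→∞} R(Ω(t)) = 0. -/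

import Mathlib

/-!
Translate the unit ball and sphere centred at `v = (t, 0, …, 0)` back to the origin. For
`‖y‖ ≤ 1 ≤ t / 2` the weight `‖v + y‖ ^ r` lies within a factor `2 ^ |r|` of `t ^ r`, so the
weighted perimeter is `O(t ^ k)`, while the weighted volume is comparable to `t ^ ℓ` times the
integral of `x_N ^ α` over the unit half-ball, which is positive and finite since `α > -1`.
The ratio is therefore `O(t ^ (k - ℓ q))` with `q = (k + N + α - 1) / (ℓ + N + α)`, and
`k < ℓ q` is exactly `k (N + α) < ℓ (N + α - 1)`.
-/

open MeasureTheory Filter Topology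

theorem rpow_le_rpow_abs_mul_rpow {a b C : ℝ} (ha : 0 < a) (hb : 0 < b) (hab : a ≤ C * b)
    (hba : b ≤ C * a) (r : ℝ) : b ^ r ≤ C ^ |r| * a ^ r := by
  have hC : 0 < C := pos_of_mul_pos_left (ha.trans_le hab) hb.le
  rcases le_or_gt 0 r with hr | hr
  · calc b ^ r ≤ (C * a) ^ r := Real.rpow_le_rpow hb.le hba hr
      _ = C ^ |r| * a ^ r := by rw [abs_of_nonneg hr, Real.mul_rpow hC.le ha.le]
  · calc b ^ r ≤ (a / C) ^ r :=
          Real.rpow_le_rpow_of_nonpos (by positivity) (by rwa [div_le_iff₀' hC]) hr.le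
      _ = C ^ |r| * a ^ r := by
          rw [abs_of_neg hr, Real.div_rpow ha.le hC.le, Real.rpow_neg hC.le]; ring

theorem setIntegral_mul_mem_Icc {X : Type*} [MeasurableSpace X] {μ : Measure X} {s : Set X}
    (hs : MeasurableSet s) {f g : X → ℝ} (hf : AEStronglyMeasurable f (μ.restrict s))
    {m M : ℝ} (hm : 0 < m) (hfs : ∀ x ∈ s, f x ∈ Set.Icc m M) (hgs : ∀ x ∈ s, 0 ≤ g x) :
    ∫ x in s, f x * g x ∂μ ∈ Set.Icc (m * ∫ x in s, g x ∂μ) (M * ∫ x in s, g x ∂μ) := by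
  have hf0 : ∀ x ∈ s, 0 < f x := fun x hx => hm.trans_le (hfs x hx).1
  by_cases hgi : IntegrableOn g s μ
  · have hfM : ∀ᵐ x ∂μ.restrict s, ‖f x‖ ≤ M := (ae_restrict_iff' hs).2 <| ae_of_all _
      fun x hx => by rw [Real.norm_of_nonneg (hf0 x hx).le]; exact (hfs x hx).2
    have hfgi : IntegrableOn (fun x => f x * g x) s μ := hgi.bdd_mul hf hfM
    rw [← integral_const_mul, ← integral_const_mul]
    exact ⟨setIntegral_mono_on (hgi.const_mul m) hfgi hs fun x hx =>
        mul_le_mul_of_nonneg_right (hfs x hx).1 (hgs x hx),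
      setIntegral_mono_on hfgi (hgi.const_mul M) hs fun x hx =>
        mul_le_mul_of_nonneg_right (hfs x hx).2 (hgs x hx)⟩
  · -- `g = f⁻¹ * (f * g)` on `s` with `f⁻¹ ≤ m⁻¹`, so `f * g` is not integrable either
    have hfgi : ¬ IntegrableOn (fun x => f x * g x) s μ := fun hfgi => hgi <| by
      have hfinv : ∀ᵐ x ∂μ.restrict s, ‖(f x)⁻¹‖ ≤ m⁻¹ := (ae_restrict_iff' hs).2 <| ae_of_all _
        fun x hx => by
          rw [norm_inv, Real.norm_of_nonneg (hf0 x hx).le]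
          exact inv_anti₀ hm (hfs x hx).1
      refine (hfgi.bdd_mul hf.aemeasurable.inv.aestronglyMeasurable hfinv).congr ?_
      refine (ae_restrict_iff' hs).2 <| ae_of_all _ fun x hx => ?_
      simp [inv_mul_cancel_left₀ (hf0 x hx).ne']
    rw [integral_undef hgi, integral_undef hfgi]
    simp

theorem norm_le_two_mul_norm_add_of_two_mul_norm_le {E : Type*} [SeminormedAddCommGroup E]
    {v y : E} (hy : 2 * ‖y‖ ≤ ‖v‖) : ‖v‖ ≤ 2 * ‖v + y‖ := by
  have := norm_sub_norm_le v (-y)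
  rw [sub_neg_eq_add, norm_neg] at this
  linarith [norm_nonneg y]

namespace EuclideanSpace

variable {N : ℕ} {j : Fin N} {α : ℝ}

theorem setIntegral_inter_coord_pos_add_left (μ : Measure (EuclideanSpace ℝ (Fin N)))
    [μ.IsAddLeftInvariant] {v : EuclideanSpace ℝ (Fin N)} (hv : v j = 0)
    (s : Set (EuclideanSpace ℝ (Fin N))) (f : EuclideanSpace ℝ (Fin N) → ℝ) :
    ∫ x in s ∩ {x | 0 < x j}, f x ∂μ = ∫ y in (v + ·) ⁻¹' s ∩ {y | 0 < y j}, f (v + y) ∂μ := by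
  rw [← (measurePreserving_add_left μ v).setIntegral_preimage_emb
    (measurableEmbedding_addLeft v) f]
  congr 2
  ext y
  simp [hv]

theorem setIntegral_norm_add_rpow_mul_mem_Icc (μ : Measure (EuclideanSpace ℝ (Fin N)))
    {s : Set (EuclideanSpace ℝ (Fin N))} (hs : MeasurableSet s) (hs1 : s ⊆ Metric.closedBall 0 1)
    {v : EuclideanSpace ℝ (Fin N)} (hv : 2 ≤ ‖v‖) (r α : ℝ) :
    ∫ y in s ∩ {y | 0 < y j}, ‖v + y‖ ^ r * y j ^ α ∂μ ∈
      Set.Icc ((2 ^ |r|)⁻¹ * ‖v‖ ^ r * ∫ y in s ∩ {y | 0 < y j}, y j ^ α ∂μ)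
        (2 ^ |r| * ‖v‖ ^ r * ∫ y in s ∩ {y | 0 < y j}, y j ^ α ∂μ) := by
  have hv0 : 0 < ‖v‖ := by linarith
  refine setIntegral_mul_mem_Icc (hs.inter (measurableSet_lt measurable_const (by fun_prop)))
    (by fun_prop : Measurable fun y => ‖v + y‖ ^ r).aestronglyMeasurable (by positivity)
    (fun y hy => ?_) fun y hy => Real.rpow_nonneg hy.2.le α
  have hy1 : ‖y‖ ≤ 1 := mem_closedBall_zero_iff.1 (hs1 hy.1)
  have h1 : ‖v‖ ≤ 2 * ‖v + y‖ := norm_le_two_mul_norm_add_of_two_mul_norm_le (by linarith)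
  have h2 : ‖v + y‖ ≤ 2 * ‖v‖ := by linarith [norm_add_le v y]
  have hvy : 0 < ‖v + y‖ := by linarith
  constructor
  · rw [inv_mul_le_iff₀ (by positivity)]
    exact rpow_le_rpow_abs_mul_rpow hvy hv0 h2 h1 r
  · exact rpow_le_rpow_abs_mul_rpow hv0 hvy h1 h2 r

/- Dominate by the product of `y ↦ y ^ α` on `(0, ρ)` in the `j`-th coordinate and of the
indicator of `[-ρ, ρ]` in the others; `y ^ α` is integrable near `0` since `α > -1`. -/
theorem integrableOn_coord_rpow_ball_inter (hα : -1 < α) (ρ : ℝ) :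
    IntegrableOn (fun x : EuclideanSpace ℝ (Fin N) => x j ^ α)
      (Metric.ball 0 ρ ∩ {x | 0 < x j}) := by
  classical
  set g : Fin N → ℝ → ℝ := Function.update (fun _ => (Set.Icc (-ρ) ρ).indicator 1) j
    ((Set.Ioo 0 ρ).indicator (· ^ α))
  have hgi : ∀ i, Integrable (g i) := by
    intro i
    rcases eq_or_ne i j with rfl | hi
    · simp only [g, Function.update_self]
      exact ((intervalIntegral.intervalIntegrable_rpow' hα (a := 0) (b := ρ)).1.mono_set
        Set.Ioo_subset_Ioc_self).integrable_indicator measurableSet_Ioo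
    · simp only [g, Function.update_of_ne hi]
      exact (integrableOn_const measure_Icc_lt_top.ne).integrable_indicator measurableSet_Icc
  have hG : Integrable (fun x : EuclideanSpace ℝ (Fin N) => ∏ i, g i (x i)) :=
    ((volume_preserving_symm_measurableEquiv_toLp (Fin N)).integrable_comp_emb
      (MeasurableEquiv.measurableEmbedding _)).2 (Integrable.fintype_prod hgi)
  have hs : MeasurableSet (Metric.ball (0 : EuclideanSpace ℝ (Fin N)) ρ ∩ {x | 0 < x j}) :=
    measurableSet_ball.inter (measurableSet_lt measurable_const (by fun_prop))
  have hmeas : Measurable fun x : EuclideanSpace ℝ (Fin N) => x j ^ α := by fun_prop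
  refine hG.integrableOn.mono' hmeas.aestronglyMeasurable
    ((ae_restrict_iff' hs).2 <| ae_of_all _ ?_)
  rintro x ⟨hxρ, hxj : 0 < x j⟩
  have hcoord : ∀ i, |x i| < ρ := fun i =>
    (PiLp.norm_apply_le x i).trans_lt (mem_ball_zero_iff.1 hxρ)
  rw [Finset.prod_eq_single j (fun i _ hi => ?_) (by simp), Real.norm_of_nonneg
    (Real.rpow_nonneg hxj.le α)]
  · simp only [g, Function.update_self]
    have hmem : x j ∈ Set.Ioo 0 ρ := ⟨hxj, (le_abs_self _).trans_lt (hcoord j)⟩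
    rw [Set.indicator_of_mem hmem]
  · simp only [g, Function.update_of_ne hi]
    have hmem : x i ∈ Set.Icc (-ρ) ρ := abs_le.1 (hcoord i).le
    exact Set.indicator_of_mem hmem _

theorem setIntegral_coord_rpow_ball_inter_pos (hα : -1 < α) {ρ : ℝ} (hρ : 0 < ρ) :
    0 < ∫ x in Metric.ball (0 : EuclideanSpace ℝ (Fin N)) ρ ∩ {x | 0 < x j}, x j ^ α := by
  have hopen : IsOpen (Metric.ball (0 : EuclideanSpace ℝ (Fin N)) ρ ∩ {x | 0 < x j}) :=
    Metric.isOpen_ball.inter (isOpen_lt continuous_const (by fun_prop))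
  have hne : (Metric.ball (0 : EuclideanSpace ℝ (Fin N)) ρ ∩ {x | 0 < x j}).Nonempty :=
    ⟨single j (ρ / 2), by simp [abs_of_pos hρ, hρ]⟩
  rw [setIntegral_pos_iff_support_of_nonneg_ae ?_ (integrableOn_coord_rpow_ball_inter hα ρ)]
  · refine (hopen.measure_pos volume hne).trans_le (measure_mono fun x hx => ⟨?_, hx⟩)
    exact (Real.rpow_pos_of_pos hx.2 α).ne'
  · exact (ae_restrict_iff' hopen.measurableSet).2 <| ae_of_all _
      fun x hx => Real.rpow_nonneg hx.2.le α

theorem setIntegral_mul_coord_rpow_nonneg (μ : Measure (EuclideanSpace ℝ (Fin N)))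
    {s : Set (EuclideanSpace ℝ (Fin N))} (hs : MeasurableSet s)
    {f : EuclideanSpace ℝ (Fin N) → ℝ} (hf : 0 ≤ f) :
    0 ≤ ∫ x in s ∩ {x | 0 < x j}, f x * x j ^ α ∂μ :=
  setIntegral_nonneg (hs.inter (measurableSet_lt measurable_const (by fun_prop)))
    fun x hx => mul_nonneg (hf x) (Real.rpow_nonneg hx.2.le α)

theorem exists_sphere_div_ball_rpow_le (μ : Measure (EuclideanSpace ℝ (Fin N)))
    [μ.IsAddLeftInvariant] (hα : -1 < α) (k ℓ q : ℝ) :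
    ∃ K, ∀ v : EuclideanSpace ℝ (Fin N), v j = 0 → 2 ≤ ‖v‖ →
      (∫ x in Metric.sphere v 1 ∩ {x | 0 < x j}, ‖x‖ ^ k * x j ^ α ∂μ) /
        (∫ x in Metric.ball v 1 ∩ {x | 0 < x j}, ‖x‖ ^ ℓ * x j ^ α) ^ q ≤
      K * ‖v‖ ^ (k - ℓ * q) := by
  set A := ∫ y in Metric.sphere (0 : EuclideanSpace ℝ (Fin N)) 1 ∩ {y | 0 < y j}, y j ^ α ∂μ
  set B := ∫ y in Metric.ball (0 : EuclideanSpace ℝ (Fin N)) 1 ∩ {y | 0 < y j}, y j ^ α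
  have hA : 0 ≤ A := setIntegral_nonneg
    (Metric.isClosed_sphere.measurableSet.inter (measurableSet_lt measurable_const (by fun_prop)))
    fun y hy => Real.rpow_nonneg hy.2.le α
  have hB : 0 < B := setIntegral_coord_rpow_ball_inter_pos hα one_pos
  refine ⟨2 ^ |k| * A * (2 ^ |ℓ|) ^ |q| / B ^ q, fun v hv hv2 => ?_⟩
  have hv0 : 0 < ‖v‖ := by linarith
  set P := ∫ x in Metric.sphere v 1 ∩ {x | 0 < x j}, ‖x‖ ^ k * x j ^ α ∂μ with hP_def
  set D := ∫ x in Metric.ball v 1 ∩ {x | 0 < x j}, ‖x‖ ^ ℓ * x j ^ α with hD_def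
  have hP : P ≤ 2 ^ |k| * ‖v‖ ^ k * A := by
    rw [hP_def, setIntegral_inter_coord_pos_add_left μ hv, preimage_add_sphere, sub_self]
    simp only [PiLp.add_apply, hv, zero_add]
    exact (setIntegral_norm_add_rpow_mul_mem_Icc μ Metric.isClosed_sphere.measurableSet
      Metric.sphere_subset_closedBall hv2 k α).2
  obtain ⟨hD₁, hD₂⟩ : D ∈ Set.Icc ((2 ^ |ℓ|)⁻¹ * ‖v‖ ^ ℓ * B) (2 ^ |ℓ| * ‖v‖ ^ ℓ * B) := by
    rw [hD_def, setIntegral_inter_coord_pos_add_left volume hv, preimage_add_ball, sub_self]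
    simp only [PiLp.add_apply, hv, zero_add]
    exact setIntegral_norm_add_rpow_mul_mem_Icc volume measurableSet_ball
      Metric.ball_subset_closedBall hv2 ℓ α
  have hD : 0 < D := lt_of_lt_of_le (by positivity) hD₁
  -- `D` is within a factor `2 ^ |ℓ|` of `‖v‖ ^ ℓ * B`, hence so are their `q`-th powers
  have hDq : (‖v‖ ^ ℓ * B) ^ q ≤ (2 ^ |ℓ|) ^ |q| * D ^ q := by
    refine rpow_le_rpow_abs_mul_rpow hD (by positivity) (by rwa [← mul_assoc]) ?_ q
    rwa [mul_assoc, inv_mul_le_iff₀ (by positivity)] at hD₁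
  calc P / D ^ q ≤ 2 ^ |k| * ‖v‖ ^ k * A / ((‖v‖ ^ ℓ * B) ^ q / (2 ^ |ℓ|) ^ |q|) := by
        refine div_le_div₀ (by positivity) hP (by positivity) ?_
        rwa [div_le_iff₀' (by positivity)]
    _ = 2 ^ |k| * A * (2 ^ |ℓ|) ^ |q| / B ^ q * ‖v‖ ^ (k - ℓ * q) := by
        rw [Real.mul_rpow (by positivity) hB.le, ← Real.rpow_mul hv0.le, Real.rpow_sub hv0]
        field_simp

end EuclideanSpace

/-- For `N ≥ 2`, `α ∈ (-1,0)`: if `k(N+α) < ℓ(N+α-1)` (and `ℓ+N+α > 0`, `k+N+α > 0`),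
then the weighted isoperimetric ratio of the unit balls `Ω(t) = B₁((t,0,…,0))` centered
on the `x₁`-axis tends to `0` as `t → +∞`; hence `k(N+α) ≥ ℓ(N+α-1)` is necessary for
existence of a minimizer. -/
theorem stmt_18 (N : ℕ) (hN : 2 ≤ N) (k ℓ α : ℝ) (hα : α ∈ Set.Ioo (-1 : ℝ) 0)
    (hl : 0 < ℓ + N + α)
    (hcond : k * ((N : ℝ) + α) < ℓ * ((N : ℝ) + α - 1))
    (c : ℝ → EuclideanSpace ℝ (Fin N))
    (hc : ∀ t, c t = EuclideanSpace.single (⟨0, by omega⟩ : Fin N) t)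
    (R : ℝ → ℝ)
    (hR : ∀ t, R t =
      (∫ x in Metric.sphere (c t) 1 ∩ {x : EuclideanSpace ℝ (Fin N) |
          0 < x (⟨N - 1, by omega⟩ : Fin N)},
        ‖x‖ ^ k * (x (⟨N - 1, by omega⟩ : Fin N)) ^ α ∂μH[(N : ℝ) - 1]) /
      (∫ x in Metric.ball (c t) 1 ∩ {x : EuclideanSpace ℝ (Fin N) |
          0 < x (⟨N - 1, by omega⟩ : Fin N)},
        ‖x‖ ^ ℓ * (x (⟨N - 1, by omega⟩ : Fin N)) ^ α) ^ ((k + N + α - 1) / (ℓ + N + α))) :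
    Tendsto R atTop (𝓝 0) := by
  set j : Fin N := ⟨N - 1, by omega⟩
  set q := (k + N + α - 1) / (ℓ + N + α)
  have hexp : k - ℓ * q < 0 := by
    have : k < ℓ * q := by rw [← mul_div_assoc, lt_div_iff₀ hl]; linarith
    linarith
  obtain ⟨K, hK⟩ :=
    EuclideanSpace.exists_sphere_div_ball_rpow_le (j := j) μH[(N : ℝ) - 1] hα.1 k ℓ q
  have hc_apply : ∀ t, c t j = 0 := fun t => by simp [j, hc, Fin.ext_iff]; omega
  have hc_norm : ∀ t, 0 ≤ t → ‖c t‖ = t := fun t ht => by simp [hc, abs_of_nonneg ht]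
  have hR_nonneg : ∀ t, 0 ≤ R t := fun t => by
    rw [hR]
    exact div_nonneg
      (EuclideanSpace.setIntegral_mul_coord_rpow_nonneg _ Metric.isClosed_sphere.measurableSet
        fun x => Real.rpow_nonneg (norm_nonneg x) k)
      (Real.rpow_nonneg (EuclideanSpace.setIntegral_mul_coord_rpow_nonneg _ measurableSet_ball
        fun x => Real.rpow_nonneg (norm_nonneg x) ℓ) _)
  refine squeeze_zero' (.of_forall hR_nonneg) ?_
    (by simpa using (tendsto_rpow_neg_atTop (neg_pos.2 hexp)).const_mul K)
  filter_upwards [eventually_ge_atTop 2] with t ht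
  have hct : ‖c t‖ = t := hc_norm t (by linarith)
  rw [hR]
  simpa only [hct] using hK (c t) (hc_apply t) (by rwa [hct])
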